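/- For real λ ≠ -1 fixed, the function ξ ↦ ω(λ,ξ) = 1 - ∫_ℝ (1+λ)w(v)/((1+λ)²+(vξ)²)dv, w(v)=e^{-v²}/√π, satisfies on ξ > 0 the linear ODE dω/dξ + (1/ξ + 2(1+λ)²/ξ³) ω = 1/ξ + 2λ(1+λ)/ξ³. -/

import Mathlib

open MeasureTheory Real Filter

noncomputable def w (v : ℝ) : ℝ := Real.exp (-v ^ 2) / Real.sqrt Real.pi

noncomputable def omg (l ξ : ℝ) : ℝ :=
  1 - ∫ v : ℝ, (1 + l) * w v / ((1 + l) ^ 2 + (v * ξ) ^ 2)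

/-! With `a = 1 + λ` and `J(ξ) = ∫ w / (a² + v²ξ²)` we have `ω = 1 - a J`.
Differentiating under the integral sign gives `ω' = 2aξ ∫ v² w / (a² + v²ξ²)²`.
Since `v w / (a² + v²ξ²)` vanishes at `±∞` its derivative integrates to zero, and by
`w' = -2 v w` this expresses `2ξ² ∫ v² w / (a² + v²ξ²)²` as `J - 2 ∫ v² w / (a² + v²ξ²)`;
the last integral is `(1 - a² J) / ξ²` because `∫ w = 1`. Substituting gives the ODE. -/

lemma w_nonneg (v : ℝ) : 0 ≤ w v := by unfold w; positivity

@[fun_prop]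
lemma continuous_w : Continuous w := by unfold w; fun_prop

@[fun_prop]
lemma measurable_w : Measurable w := continuous_w.measurable

lemma hasDerivAt_w (v : ℝ) : HasDerivAt w (-2 * v * w v) v := by
  have h := ((hasDerivAt_pow 2 v).neg.exp).div_const (Real.sqrt Real.pi)
  refine h.congr_deriv ?_
  simp only [w, Pi.neg_apply]; push_cast; ring

lemma integral_w : ∫ v, w v = 1 := by
  have h : ∫ v : ℝ, Real.exp (-v ^ 2) = Real.sqrt Real.pi := by
    simpa using integral_gaussian 1
  simp only [w, integral_div, h]
  exact div_self (by positivity)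

lemma integrable_pow_mul_w (n : ℕ) : Integrable fun v => v ^ n * w v := by
  have h := (integrable_rpow_mul_exp_neg_mul_sq one_pos
    (by linarith [n.cast_nonneg (α := ℝ)] : (-1 : ℝ) < n)).div_const (Real.sqrt Real.pi)
  simpa [w, mul_div_assoc] using h

lemma integrable_w : Integrable w := by
  simpa using integrable_pow_mul_w 0

section

variable {a : ℝ}

lemma sq_add_mul_sq_pos (ha : a ≠ 0) (t v : ℝ) : 0 < a ^ 2 + (v * t) ^ 2 := by positivity

lemma MeasureTheory.Integrable.div_sq_add_mul_sq_pow (ha : a ≠ 0) {f : ℝ → ℝ}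
    (hf : Integrable f) (t : ℝ) (k : ℕ) :
    Integrable fun v => f v / (a ^ 2 + (v * t) ^ 2) ^ k := by
  simp only [div_eq_inv_mul]
  refine hf.bdd_mul (c := ((a ^ 2) ^ k)⁻¹) (by fun_prop) (Eventually.of_forall fun v => ?_)
  rw [norm_inv, Real.norm_of_nonneg (by positivity)]
  gcongr
  exact le_add_of_nonneg_right (sq_nonneg (v * t))

lemma MeasureTheory.Integrable.div_sq_add_mul_sq (ha : a ≠ 0) {f : ℝ → ℝ}
    (hf : Integrable f) (t : ℝ) : Integrable fun v => f v / (a ^ 2 + (v * t) ^ 2) := by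
  simpa using hf.div_sq_add_mul_sq_pow ha t 1

lemma hasDerivAt_integral_w_div_sq_add_mul_sq (ha : a ≠ 0) (t₀ : ℝ) :
    HasDerivAt (fun t => ∫ v, w v / (a ^ 2 + (v * t) ^ 2))
      (-(2 * t₀) * ∫ v, v ^ 2 * w v / (a ^ 2 + (v * t₀) ^ 2) ^ 2) t₀ := by
  have hD := sq_add_mul_sq_pos ha
  have hderiv : ∀ t v, HasDerivAt (fun s => w v / (a ^ 2 + (v * s) ^ 2))
      (-(2 * t) * (v ^ 2 * w v / (a ^ 2 + (v * t) ^ 2) ^ 2)) t := by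
    intro t v
    have hden : HasDerivAt (fun s => a ^ 2 + (v * s) ^ 2) (2 * (v * t) * v) t := by
      simpa using ((hasDerivAt_id' t).const_mul v).pow 2 |>.const_add (a ^ 2)
    refine ((hasDerivAt_const t (w v)).div hden (hD t v).ne').congr_deriv ?_
    field_simp
    ring
  have hbound : ∀ v, ∀ t ∈ Metric.ball t₀ 1,
      ‖-(2 * t) * (v ^ 2 * w v / (a ^ 2 + (v * t) ^ 2) ^ 2)‖
        ≤ 2 * (|t₀| + 1) / (a ^ 2) ^ 2 * (v ^ 2 * w v) := by
    intro v t ht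
    have ht' : |t| ≤ |t₀| + 1 := by
      have := abs_sub_abs_le_abs_sub t t₀
      rw [Metric.mem_ball, Real.dist_eq] at ht
      linarith
    have hden : (a ^ 2) ^ 2 ≤ (a ^ 2 + (v * t) ^ 2) ^ 2 := by
      gcongr
      exact le_add_of_nonneg_right (sq_nonneg (v * t))
    have hvw : 0 ≤ v ^ 2 * w v := mul_nonneg (sq_nonneg v) (w_nonneg v)
    rw [norm_mul, norm_neg, norm_mul, Real.norm_two, Real.norm_eq_abs,
      Real.norm_of_nonneg (div_nonneg hvw (by positivity)), mul_div_assoc', div_mul_eq_mul_div]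
    gcongr
  refine (hasDerivAt_integral_of_dominated_loc_of_deriv_le (Metric.ball_mem_nhds t₀ one_pos)
    (Eventually.of_forall fun t => ?_) (integrable_w.div_sq_add_mul_sq ha t₀)
    ?_ (Eventually.of_forall hbound) ((integrable_pow_mul_w 2).const_mul _)
    (Eventually.of_forall fun v t _ => hderiv t v)).2.congr_deriv ?_
  · exact (by fun_prop : Measurable fun v => w v / (a ^ 2 + (v * t) ^ 2)).aestronglyMeasurable
  · exact (by fun_prop : Measurable fun v =>
      -(2 * t₀) * (v ^ 2 * w v / (a ^ 2 + (v * t₀) ^ 2) ^ 2)).aestronglyMeasurable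
  · exact integral_const_mul _ _

lemma sq_mul_integral_sq_mul_w_div (ha : a ≠ 0) (t : ℝ) :
    t ^ 2 * ∫ v, v ^ 2 * w v / (a ^ 2 + (v * t) ^ 2)
      = 1 - a ^ 2 * ∫ v, w v / (a ^ 2 + (v * t) ^ 2) := by
  have hpt : ∀ v, t ^ 2 * (v ^ 2 * w v / (a ^ 2 + (v * t) ^ 2))
      = w v - a ^ 2 * (w v / (a ^ 2 + (v * t) ^ 2)) := by
    intro v
    have := (sq_add_mul_sq_pos ha t v).ne'
    field_simp
    ring
  rw [← integral_const_mul, funext hpt, integral_sub integrable_w, integral_const_mul,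
    integral_w]
  exact (integrable_w.div_sq_add_mul_sq ha t).const_mul (a ^ 2)

lemma two_mul_sq_mul_integral_sq_mul_w_div_sq (ha : a ≠ 0) (t : ℝ) :
    2 * t ^ 2 * ∫ v, v ^ 2 * w v / (a ^ 2 + (v * t) ^ 2) ^ 2
      = (∫ v, w v / (a ^ 2 + (v * t) ^ 2)) - 2 * ∫ v, v ^ 2 * w v / (a ^ 2 + (v * t) ^ 2) := by
  have hD := sq_add_mul_sq_pos ha t
  have hJ₁ := integrable_w.div_sq_add_mul_sq ha t
  have hJ₂ := (integrable_pow_mul_w 2).div_sq_add_mul_sq ha t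
  have hJ₃ := (integrable_pow_mul_w 2).div_sq_add_mul_sq_pow ha t 2
  have hJ₁₂ : Integrable fun v =>
      w v / (a ^ 2 + (v * t) ^ 2) - 2 * (v ^ 2 * w v / (a ^ 2 + (v * t) ^ 2)) :=
    hJ₁.sub (hJ₂.const_mul 2)
  have hderiv : ∀ v, HasDerivAt (fun v => v * w v / (a ^ 2 + (v * t) ^ 2))
      (w v / (a ^ 2 + (v * t) ^ 2) - 2 * (v ^ 2 * w v / (a ^ 2 + (v * t) ^ 2))
        - 2 * t ^ 2 * (v ^ 2 * w v / (a ^ 2 + (v * t) ^ 2) ^ 2)) v := by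
    intro v
    have hden : HasDerivAt (fun v => a ^ 2 + (v * t) ^ 2) (2 * (v * t) * t) v := by
      simpa using ((hasDerivAt_id' v).mul_const t).pow 2 |>.const_add (a ^ 2)
    refine (((hasDerivAt_id' v).mul (hasDerivAt_w v)).div hden (hD v).ne').congr_deriv ?_
    simp only [Pi.mul_apply]
    field_simp
    ring
  have hzero := integral_eq_zero_of_hasDerivAt_of_integrable hderiv
    (hJ₁₂.sub (hJ₃.const_mul _))
    (by simpa using (integrable_pow_mul_w 1).div_sq_add_mul_sq ha t)
  rw [integral_sub hJ₁₂ (hJ₃.const_mul _), integral_sub hJ₁ (hJ₂.const_mul 2),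
    integral_const_mul, integral_const_mul] at hzero
  linarith

end

lemma omg_eq_one_sub_mul_integral (l t : ℝ) :
    omg l t = 1 - (1 + l) * ∫ v, w v / ((1 + l) ^ 2 + (v * t) ^ 2) := by
  simp only [omg, mul_div_assoc, integral_const_mul]

/-- for fixed real λ ≠ -1, the function ξ ↦ ω(λ,ξ) satisfies
on ξ > 0 the linear ODE dω/dξ + (1/ξ + 2(1+λ)²/ξ³) ω = 1/ξ + 2λ(1+λ)/ξ³. -/
theorem stmt18 (l : ℝ) (hl : l ≠ -1) (ξ : ℝ) (hξ : 0 < ξ) :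
    HasDerivAt (fun ξ : ℝ => omg l ξ)
      (1 / ξ + 2 * l * (1 + l) / ξ ^ 3
        - (1 / ξ + 2 * (1 + l) ^ 2 / ξ ^ 3) * omg l ξ) ξ := by
  have ha : 1 + l ≠ 0 := fun h => hl (by linarith)
  simp only [omg_eq_one_sub_mul_integral]
  refine (((hasDerivAt_integral_w_div_sq_add_mul_sq ha ξ).const_mul (1 + l)).const_sub
    1).congr_deriv ?_
  have hsecond := sq_mul_integral_sq_mul_w_div ha ξ
  have hparts := two_mul_sq_mul_integral_sq_mul_w_div_sq ha ξ
  set J₁ := ∫ v, w v / ((1 + l) ^ 2 + (v * ξ) ^ 2)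
  set J₂ := ∫ v, v ^ 2 * w v / ((1 + l) ^ 2 + (v * ξ) ^ 2)
  set J₃ := ∫ v, v ^ 2 * w v / ((1 + l) ^ 2 + (v * ξ) ^ 2) ^ 2
  field_simp
  linear_combination (-2 * (1 + l)) * hsecond + ((1 + l) * ξ ^ 2) * hparts
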